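/- Let H be a real Hilbert space and let A, B ⊆ H be nonempty closed convex sets with A ∩ B ≠ ∅. Let (λ_n) be a sequence in [0,1] with ∑ λ_n(1−λ_n) = ∞, let β ∈ (0,1), let q ∈ H satisfy q − P_{A∩B}(q) ∈ N_A(P_{A∩B}(q)) + N_B(P_{A∩B}(q)), and given x_0 ∈ H define x_{n+1} = (1−λ_n) x_n + λ_n (2β P_{B−q} − Id)((2β P_{A−q} − Id)(x_n)). Then the sequence (P_A(q + x_n)) converges strongly (in norm) to P_{A∩B}(q). -/
import Mathlib


open Pointwise RealInnerProductSpace Filter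

/-- The normal cone to a set `C` at `x`:
`N_C(x) = {u | ⟪u, c − x⟫ ≤ 0 for all c ∈ C}` if `x ∈ C`, and `∅` otherwise. -/
def normalCone {H : Type*} [NormedAddCommGroup H] [InnerProductSpace ℝ H]
    (C : Set H) (x : H) : Set H :=
  {u | x ∈ C ∧ ∀ c ∈ C, ⟪u, c - x⟫ ≤ 0}

/-- `P` is the metric projector onto `C`: `P x` is a point of `C` nearest to `x`. -/
def IsProjOn {H : Type*} [NormedAddCommGroup H] [InnerProductSpace ℝ H]
    (C : Set H) (P : H → H) : Prop :=
  ∀ x : H, P x ∈ C ∧ ∀ c ∈ C, ‖x - P x‖ ≤ ‖x - c‖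

section Helpers
variable {H : Type*} [NormedAddCommGroup H] [InnerProductSpace ℝ H]
variable {C : Set H} {P : H → H}

lemma proj_inner_le (hC : Convex ℝ C) (hP : IsProjOn C P) (x : H) {c : H} (hc : c ∈ C) :
    ⟪x - P x, c - P x⟫ ≤ 0 := by
  have hPx : P x ∈ C := (hP x).1
  have : Nonempty C := ⟨⟨P x, hPx⟩⟩
  have hiInf : ‖x - P x‖ = ⨅ w : C, ‖x - w‖ := by
    apply le_antisymm
    · exact le_ciInf fun w => (hP x).2 w w.2
    · exact ciInf_le ⟨0, fun r ⟨w, hw⟩ => hw ▸ norm_nonneg _⟩ (⟨P x, hPx⟩ : C)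
  exact (norm_eq_iInf_iff_real_inner_le_zero hC hPx).1 hiInf c hc

lemma proj_eq_of (hC : Convex ℝ C) (hP : IsProjOn C P)
    {x y : H} (hy : y ∈ C) (hvi : ∀ c ∈ C, ⟪x - y, c - y⟫ ≤ 0) : P x = y := by
  have h1 : ⟪x - P x, y - P x⟫ ≤ 0 := proj_inner_le hC hP x hy
  have h2 : ⟪x - y, P x - y⟫ ≤ 0 := hvi (P x) (hP x).1
  have hsplit : ‖P x - y‖ ^ 2 = ⟪P x - x, P x - y⟫ + ⟪x - y, P x - y⟫ := by
    rw [← real_inner_self_eq_norm_sq, ← inner_add_left]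
    congr 1
    abel
  have h3 : ⟪P x - x, P x - y⟫ ≤ 0 := by
    have heq : ⟪P x - x, P x - y⟫ = ⟪x - P x, y - P x⟫ := by
      rw [show P x - x = -(x - P x) by abel, show P x - y = -(y - P x) by abel,
        inner_neg_neg]
    linarith [heq ▸ h1]
  have h4 : ‖P x - y‖ ^ 2 ≤ 0 := by rw [hsplit]; linarith
  have h5 : ‖P x - y‖ = 0 := by nlinarith [norm_nonneg (P x - y)]
  rwa [norm_sub_eq_zero_iff] at h5

lemma proj_firm (hC : Convex ℝ C) (hP : IsProjOn C P) (z w : H) :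
    ‖P z - P w‖ ^ 2 ≤ ⟪P z - P w, z - w⟫ := by
  have e1 : ⟪z - P z, P w - P z⟫ ≤ 0 := proj_inner_le hC hP z (hP w).1
  have e2 : ⟪w - P w, P z - P w⟫ ≤ 0 := proj_inner_le hC hP w (hP z).1
  have hz : z - w = (z - P z) + (P z - P w) + (P w - w) := by abel
  rw [hz, inner_add_right, inner_add_right, real_inner_self_eq_norm_sq]
  have g1 : (0:ℝ) ≤ ⟪P z - P w, z - P z⟫ := by
    rw [real_inner_comm, show P z - P w = -(P w - P z) by abel, inner_neg_right]
    linarith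
  have g2 : (0:ℝ) ≤ ⟪P z - P w, P w - w⟫ := by
    rw [show P z - P w = -(P w - P z) by abel, show P w - w = -(w - P w) by abel,
      inner_neg_neg, real_inner_comm]
    have e2' : ⟪w - P w, P w - P z⟫ = -⟪w - P w, P z - P w⟫ := by
      rw [show P w - P z = -(P z - P w) by abel, inner_neg_right]
    linarith [e2']
  linarith

lemma proj_nonexp (hC : Convex ℝ C) (hP : IsProjOn C P) (z w : H) :
    ‖P z - P w‖ ≤ ‖z - w‖ := by
  have h := proj_firm hC hP z w
  have hcs := real_inner_le_norm (P z - P w) (z - w)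
  rcases eq_or_lt_of_le (norm_nonneg (P z - P w)) with h0 | h0
  · rw [← h0]; exact norm_nonneg _
  · nlinarith

lemma refl_contract (hC : Convex ℝ C) (hP : IsProjOn C P)
    {β : ℝ} (hβ0 : 0 ≤ β) (z w : H) :
    ‖((2 * β) • P z - z) - ((2 * β) • P w - w)‖ ^ 2
      ≤ ‖z - w‖ ^ 2 - 4 * β * (1 - β) * ‖P z - P w‖ ^ 2 := by
  have hfirm := proj_firm hC hP z w
  have hrw : ((2 * β) • P z - z) - ((2 * β) • P w - w)
      = (2 * β) • (P z - P w) - (z - w) := by module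
  rw [hrw, norm_sub_sq_real, norm_smul, real_inner_smul_left, Real.norm_eq_abs,
    abs_of_nonneg (by linarith : (0:ℝ) ≤ 2 * β)]
  nlinarith [mul_nonneg hβ0 (sub_nonneg.2 hfirm)]

lemma convex_norm_sq {lam : ℝ} (h0 : 0 ≤ lam) (h1 : lam ≤ 1) (w z : H) :
    ‖(1 - lam) • w + lam • z‖ ^ 2 ≤ (1 - lam) * ‖w‖ ^ 2 + lam * ‖z‖ ^ 2 := by
  rw [norm_add_sq_real, norm_smul, norm_smul, real_inner_smul_left, real_inner_smul_right,
    Real.norm_eq_abs, Real.norm_eq_abs, abs_of_nonneg h0,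
    abs_of_nonneg (by linarith : (0:ℝ) ≤ 1 - lam)]
  nlinarith [real_inner_le_norm w z,
    mul_nonneg (mul_nonneg h0 (by linarith : (0:ℝ) ≤ 1 - lam))
      (sq_nonneg (‖w‖ - ‖z‖)),
    mul_nonneg (mul_nonneg h0 (by linarith : (0:ℝ) ≤ 1 - lam))
      (sub_nonneg.2 (real_inner_le_norm w z))]

/-- The AAMR operator. -/
def Tmap {H : Type*} [NormedAddCommGroup H] [InnerProductSpace ℝ H]
    (β : ℝ) (PAq PBq : H → H) (z : H) : H :=
  (2 * β) • PBq ((2 * β) • PAq z - z) - ((2 * β) • PAq z - z)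

end Helpers
set_option maxHeartbeats 1000000 in

open Finset in
lemma tendsto_zero_of_step (a lam : ℕ → ℝ) (C : ℝ) (hC : 0 < C)
    (ha : ∀ n, 0 ≤ a n) (hl : ∀ n, 0 ≤ lam n)
    (hstep : ∀ n, |a (n + 1) - a n| ≤ C * lam n)
    (hsum : Summable (fun n => lam n * a n ^ 2))
    (hdiv : ¬ Summable lam) :
    Tendsto a atTop (nhds 0) := by
  rw [Metric.tendsto_atTop]
  intro ε hε
  by_contra hcon
  push_neg at hcon
  have hcon' : ∀ N, ∃ n, N ≤ n ∧ ε ≤ a n := by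
    intro N
    obtain ⟨n, hn, h⟩ := hcon N
    rw [Real.dist_eq, sub_zero, abs_of_nonneg (ha n)] at h
    exact ⟨n, hn, h⟩
  -- frequently a n < ε/2
  have hsmall : ∀ N, ∃ n, N ≤ n ∧ a n < ε / 2 := by
    intro N
    by_contra h
    push_neg at h
    apply hdiv
    rw [← summable_nat_add_iff N]
    have hs2 : Summable (fun n => lam (n + N) * a (n + N) ^ 2) :=
      (summable_nat_add_iff N).2 hsum
    refine (hs2.mul_left (4 / ε ^ 2)).of_nonneg_of_le (fun n => hl _) (fun n => ?_)
    have hge : ε / 2 ≤ a (n + N) := h (n + N) (Nat.le_add_left _ _)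
    have h2 : ε ^ 2 / 4 ≤ a (n + N) ^ 2 := by nlinarith
    have h3 : lam (n + N) * (ε ^ 2 / 4) ≤ lam (n + N) * a (n + N) ^ 2 :=
      mul_le_mul_of_nonneg_left h2 (hl _)
    calc lam (n + N) = 4 / ε ^ 2 * (lam (n + N) * (ε ^ 2 / 4)) := by
          field_simp
      _ ≤ 4 / ε ^ 2 * (lam (n + N) * a (n + N) ^ 2) :=
          mul_le_mul_of_nonneg_left h3 (by positivity)
  -- small tail
  set δ : ℝ := ε ^ 3 / (16 * C) with hδ
  have hδpos : 0 < δ := by positivity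
  obtain ⟨N₁, hN₁⟩ := (Metric.tendsto_atTop.1 (tendsto_sum_nat_add
    (fun n => lam n * a n ^ 2))) δ hδpos
  have htail : ∑' k, lam (k + N₁) * a (k + N₁) ^ 2 < δ := by
    have := hN₁ N₁ le_rfl
    rw [Real.dist_eq, sub_zero] at this
    calc ∑' k, lam (k + N₁) * a (k + N₁) ^ 2
        ≤ |∑' k, lam (k + N₁) * a (k + N₁) ^ 2| := le_abs_self _
      _ < δ := this
  obtain ⟨m, hmN, hm⟩ := hcon' N₁
  obtain ⟨n₀, hn₀, hn₀'⟩ := hsmall (m + 1)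
  have hex : ∃ k, a (m + 1 + k) < ε / 2 := ⟨n₀ - (m + 1), by
    rwa [Nat.add_sub_cancel' hn₀]⟩
  set j0 := Nat.find hex with hj0
  set m' := m + 1 + j0 with hm'
  have hm'small : a m' < ε / 2 := Nat.find_spec hex
  have hband : ∀ j, m ≤ j → j < m' → ε / 2 ≤ a j := by
    intro j hj1 hj2
    rcases eq_or_lt_of_le hj1 with rfl | hlt
    · linarith [hm]
    · have : ¬ a (m + 1 + (j - (m + 1))) < ε / 2 :=
        Nat.find_min hex (by omega)
      rw [show m + 1 + (j - (m + 1)) = j by omega] at this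
      linarith [this]
  -- telescoping bound on sum of lam
  have hmm' : m ≤ m' := by omega
  have htel : a m' - a m = ∑ j ∈ Ico m m', (a (j + 1) - a j) := by
    rw [Finset.sum_Ico_eq_sum_range]
    rw [show ∑ i ∈ range (m' - m), (a (m + i + 1) - a (m + i))
        = ∑ i ∈ range (m' - m), ((fun k => a (m + k)) (i + 1) - (fun k => a (m + k)) i) by
      apply Finset.sum_congr rfl; intro i _; simp [Nat.add_assoc, Nat.add_comm 1 i]]
    rw [Finset.sum_range_sub (fun k => a (m + k))]
    simp [Nat.add_sub_cancel' hmm']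
  have hS : ε / (2 * C) ≤ ∑ j ∈ Ico m m', lam j := by
    have h1 : ε / 2 ≤ a m - a m' := by linarith
    have h2 : a m - a m' ≤ ∑ j ∈ Ico m m', |a (j + 1) - a j| := by
      calc a m - a m' ≤ |a m' - a m| := by rw [abs_sub_comm]; exact le_abs_self _
        _ = |∑ j ∈ Ico m m', (a (j + 1) - a j)| := by rw [htel]
        _ ≤ ∑ j ∈ Ico m m', |a (j + 1) - a j| := Finset.abs_sum_le_sum_abs _ _
    have h3 : ∑ j ∈ Ico m m', |a (j + 1) - a j| ≤ C * ∑ j ∈ Ico m m', lam j := by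
      rw [Finset.mul_sum]
      exact Finset.sum_le_sum fun j _ => hstep j
    rw [div_le_iff₀ (by positivity)]
    nlinarith
  have hSsq : ε ^ 2 / 4 * (ε / (2 * C)) ≤ ∑ j ∈ Ico m m', lam j * a j ^ 2 := by
    calc ε ^ 2 / 4 * (ε / (2 * C)) ≤ ε ^ 2 / 4 * ∑ j ∈ Ico m m', lam j := by
          apply mul_le_mul_of_nonneg_left hS (by positivity)
      _ = ∑ j ∈ Ico m m', ε ^ 2 / 4 * lam j := by rw [Finset.mul_sum]
      _ ≤ ∑ j ∈ Ico m m', lam j * a j ^ 2 := by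
          apply Finset.sum_le_sum
          intro j hj
          rw [Finset.mem_Ico] at hj
          have hbj := hband j hj.1 hj.2
          have h2 : ε ^ 2 / 4 ≤ a j ^ 2 := by nlinarith
          calc ε ^ 2 / 4 * lam j ≤ a j ^ 2 * lam j :=
                mul_le_mul_of_nonneg_right h2 (hl j)
            _ = lam j * a j ^ 2 := mul_comm _ _
  have hle : ∑ j ∈ Ico m m', lam j * a j ^ 2 ≤ ∑' k, lam (k + N₁) * a (k + N₁) ^ 2 := by
    calc ∑ j ∈ Ico m m', lam j * a j ^ 2
        ≤ ∑ j ∈ Ico N₁ m', lam j * a j ^ 2 := by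
          apply Finset.sum_le_sum_of_subset_of_nonneg
          · exact Finset.Ico_subset_Ico hmN le_rfl
          · intro j _ _; exact mul_nonneg (hl j) (sq_nonneg _)
      _ = ∑ i ∈ range (m' - N₁), lam (N₁ + i) * a (N₁ + i) ^ 2 :=
          Finset.sum_Ico_eq_sum_range _ _ _
      _ = ∑ i ∈ range (m' - N₁), lam (i + N₁) * a (i + N₁) ^ 2 := by
          apply Finset.sum_congr rfl; intro i _; rw [Nat.add_comm]
      _ ≤ ∑' k, lam (k + N₁) * a (k + N₁) ^ 2 := by
          apply Summable.sum_le_tsum _ (fun i _ => mul_nonneg (hl _) (sq_nonneg _))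
          exact (summable_nat_add_iff N₁).2 hsum
  have : ε ^ 2 / 4 * (ε / (2 * C)) < δ := by linarith
  have heq : ε ^ 2 / 4 * (ε / (2 * C)) = ε ^ 3 / (8 * C) := by
    field_simp; ring
  rw [heq, hδ, div_lt_div_iff₀ (by positivity) (by positivity)] at this
  nlinarith [pow_pos hε 3]

set_option maxHeartbeats 1000000 in
theorem stmt14 {H : Type*} [NormedAddCommGroup H] [InnerProductSpace ℝ H] [CompleteSpace H]
    (A B : Set H) (hAne : A.Nonempty) (hBne : B.Nonempty)
    (hAcl : IsClosed A) (hBcl : IsClosed B)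
    (hAcv : Convex ℝ A) (hBcv : Convex ℝ B)
    (hABne : (A ∩ B).Nonempty)
    (lam : ℕ → ℝ) (hlam : ∀ n, lam n ∈ Set.Icc (0 : ℝ) 1)
    (hlamsum : ¬ Summable (fun n => lam n * (1 - lam n)))
    (β : ℝ) (hβ : β ∈ Set.Ioo (0 : ℝ) 1) (q : H)
    -- the projectors onto `A`, `A ∩ B`, `A − q` and `B − q`
    (PA PAB PAq PBq : H → H)
    (hPA : IsProjOn A PA) (hPAB : IsProjOn (A ∩ B) PAB)
    (hPAq : IsProjOn ((fun a => a - q) '' A) PAq)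
    (hPBq : IsProjOn ((fun b => b - q) '' B) PBq)
    -- the constraint qualification `q − P_{A∩B}(q) ∈ N_A(P_{A∩B}(q)) + N_B(P_{A∩B}(q))`
    (hq : q - PAB q ∈ normalCone A (PAB q) + normalCone B (PAB q))
    (x : ℕ → H)
    (hx : ∀ n, x (n + 1) = (1 - lam n) • x n +
        lam n • ((2 * β) • PBq ((2 * β) • PAq (x n) - x n) - ((2 * β) • PAq (x n) - x n))) :
    -- the sequence `P_A(q + x n)` converges strongly to `P_{A∩B}(q)`
    Tendsto (fun n => PA (q + x n)) atTop (nhds (PAB q)) := by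
  obtain ⟨hβ0, hβ1⟩ := hβ
  have hβ0' : (0:ℝ) ≤ β := le_of_lt hβ0
  -- convexity of the translates
  have hAcv' : Convex ℝ ((fun a => a - q) '' A) := by
    have himg : (fun a => a - q) '' A = (fun z => -q + z) '' A := by
      ext w; simp [sub_eq_neg_add]
    rw [himg]
    exact hAcv.translate (-q)
  have hBcv' : Convex ℝ ((fun b => b - q) '' B) := by
    have himg : (fun b => b - q) '' B = (fun z => -q + z) '' B := by
      ext w; simp [sub_eq_neg_add]
    rw [himg]
    exact hBcv.translate (-q)
  -- decompose the constraint qualification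
  rw [Set.mem_add] at hq
  obtain ⟨uu, huu, vv, hvv, huv⟩ := hq
  obtain ⟨hqA, hNA⟩ := huu
  obtain ⟨hqB, hNB⟩ := hvv
  set pt : H := PAB q - q with hpt
  set f : H := pt + (2 * (1 - β)) • uu with hf
  set yf : H := (2 * β) • pt - f with hyf
  have hptA : pt ∈ (fun a => a - q) '' A := ⟨PAB q, hqA, rfl⟩
  have hptB : pt ∈ (fun b => b - q) '' B := ⟨PAB q, hqB, rfl⟩
  -- the two projection identities at the fixed point
  have hPAqf : PAq f = pt := by
    apply proj_eq_of hAcv' hPAq hptA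
    rintro c ⟨a, haA, rfl⟩
    have h1 : f - pt = (2 * (1 - β)) • uu := by rw [hf]; abel
    have h2 : (a - q) - pt = a - PAB q := by rw [hpt]; abel
    rw [h1, h2, real_inner_smul_left]
    have := hNA a haA
    nlinarith
  have hvv' : yf - pt = (2 * (1 - β)) • vv := by
    have hv : vv = (q - PAB q) - uu := by rw [← huv]; abel
    rw [hyf, hf, hpt, hv]
    module
  have hPBqyf : PBq yf = pt := by
    apply proj_eq_of hBcv' hPBq hptB
    rintro c ⟨b, hbB, rfl⟩
    have h2 : (b - q) - pt = b - PAB q := by rw [hpt]; abel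
    rw [hvv', h2, real_inner_smul_left]
    have := hNB b hbB
    nlinarith
  have hf2 : (2 * β) • pt - yf = f := by rw [hyf]; abel
  -- key contraction inequality for the AAMR operator
  have hTfix : ∀ z : H, ‖Tmap β PAq PBq z - f‖ ^ 2 ≤ ‖z - f‖ ^ 2
      - 4 * β * (1 - β) * ‖PAq z - pt‖ ^ 2
      - 4 * β * (1 - β) * ‖PBq ((2 * β) • PAq z - z) - pt‖ ^ 2 := by
    intro z
    have h1 := refl_contract hAcv' hPAq hβ0' z f
    rw [hPAqf, ← hyf] at h1
    have h2 := refl_contract hBcv' hPBq hβ0' ((2 * β) • PAq z - z) yf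
    rw [hPBqyf, hf2] at h2
    simp only [Tmap]
    linarith
  set K : ℝ := 4 * β * (1 - β) with hK
  have hKpos : 0 < K := by rw [hK]; nlinarith
  have hx' : ∀ n, x (n + 1) = (1 - lam n) • x n + lam n • Tmap β PAq PBq (x n) := hx
  -- one-step inequality
  have hmain : ∀ n, ‖x (n + 1) - f‖ ^ 2 ≤ ‖x n - f‖ ^ 2
      - K * lam n * ‖PAq (x n) - pt‖ ^ 2
      - K * lam n * ‖PBq ((2 * β) • PAq (x n) - x n) - pt‖ ^ 2 := by
    intro n
    have hcomb : x (n + 1) - f = (1 - lam n) • (x n - f) + lam n • (Tmap β PAq PBq (x n) - f) := by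
      rw [hx' n]; module
    have hcvx := convex_norm_sq (hlam n).1 (hlam n).2 (x n - f) (Tmap β PAq PBq (x n) - f)
    rw [← hcomb] at hcvx
    have h3 := mul_le_mul_of_nonneg_left (hTfix (x n)) (hlam n).1
    nlinarith [hcvx, h3]
  -- the distance to `f` is nonincreasing
  have hmono : ∀ n, ‖x (n + 1) - f‖ ≤ ‖x n - f‖ := by
    intro n
    have h := hmain n
    have h1 : 0 ≤ K * lam n * ‖PAq (x n) - pt‖ ^ 2 :=
      mul_nonneg (mul_nonneg (le_of_lt hKpos) (hlam n).1) (sq_nonneg _)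
    have h2 : 0 ≤ K * lam n * ‖PBq ((2 * β) • PAq (x n) - x n) - pt‖ ^ 2 :=
      mul_nonneg (mul_nonneg (le_of_lt hKpos) (hlam n).1) (sq_nonneg _)
    nlinarith [norm_nonneg (x (n + 1) - f), norm_nonneg (x n - f)]
  have hbound : ∀ n, ‖x n - f‖ ≤ ‖x 0 - f‖ := by
    intro n
    induction n with
    | zero => exact le_rfl
    | succ k ih => exact le_trans (hmono k) ih
  -- summability of the residuals
  have hps : ∀ N : ℕ, (∑ n ∈ Finset.range N, K * lam n * ‖PAq (x n) - pt‖ ^ 2)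
      + ‖x N - f‖ ^ 2 ≤ ‖x 0 - f‖ ^ 2 := by
    intro N
    induction N with
    | zero => simp
    | succ k ih =>
      rw [Finset.sum_range_succ]
      have h := hmain k
      have h2 : 0 ≤ K * lam k * ‖PBq ((2 * β) • PAq (x k) - x k) - pt‖ ^ 2 :=
        mul_nonneg (mul_nonneg (le_of_lt hKpos) (hlam k).1) (sq_nonneg _)
      linarith
  have hsumm : Summable (fun n => lam n * ‖PAq (x n) - pt‖ ^ 2) := by
    apply summable_of_sum_range_le
      (c := ‖x 0 - f‖ ^ 2 / K)
      (fun n => mul_nonneg (hlam n).1 (sq_nonneg _))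
    intro N
    rw [le_div_iff₀ hKpos]
    calc (∑ n ∈ Finset.range N, lam n * ‖PAq (x n) - pt‖ ^ 2) * K
        = ∑ n ∈ Finset.range N, K * lam n * ‖PAq (x n) - pt‖ ^ 2 := by
          rw [Finset.sum_mul]; apply Finset.sum_congr rfl; intro n _; ring
      _ ≤ ‖x 0 - f‖ ^ 2 := by
          have := hps N
          nlinarith [sq_nonneg ‖x N - f‖]
  -- divergence of the relaxation parameters
  have hdiv : ¬ Summable lam := by
    intro h
    apply hlamsum
    refine h.of_nonneg_of_le (fun n => mul_nonneg (hlam n).1 (by linarith [(hlam n).2])) ?_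
    intro n
    nlinarith [(hlam n).1, (hlam n).2]
  -- step bound for the shadow sequence
  have hstep : ∀ n, |‖PAq (x (n + 1)) - pt‖ - ‖PAq (x n) - pt‖|
      ≤ (2 * ‖x 0 - f‖ + 1) * lam n := by
    intro n
    have t1 : |‖PAq (x (n + 1)) - pt‖ - ‖PAq (x n) - pt‖|
        ≤ ‖PAq (x (n + 1)) - PAq (x n)‖ := by
      have := abs_norm_sub_norm_le (PAq (x (n + 1)) - pt) (PAq (x n) - pt)
      rwa [sub_sub_sub_cancel_right] at this
    have t2 : ‖PAq (x (n + 1)) - PAq (x n)‖ ≤ ‖x (n + 1) - x n‖ :=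
      proj_nonexp hAcv' hPAq _ _
    have hd : x (n + 1) - x n = lam n • (Tmap β PAq PBq (x n) - x n) := by
      rw [hx' n]; module
    have t3 : ‖x (n + 1) - x n‖ = lam n * ‖Tmap β PAq PBq (x n) - x n‖ := by
      rw [hd, norm_smul, Real.norm_eq_abs, abs_of_nonneg (hlam n).1]
    have t4 : ‖Tmap β PAq PBq (x n) - f‖ ≤ ‖x n - f‖ := by
      have h := hTfix (x n)
      have h1 : 0 ≤ K * ‖PAq (x n) - pt‖ ^ 2 :=
        mul_nonneg (le_of_lt hKpos) (sq_nonneg _)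
      have h2 : 0 ≤ K * ‖PBq ((2 * β) • PAq (x n) - x n) - pt‖ ^ 2 :=
        mul_nonneg (le_of_lt hKpos) (sq_nonneg _)
      nlinarith [norm_nonneg (Tmap β PAq PBq (x n) - f), norm_nonneg (x n - f)]
    have t5 : ‖Tmap β PAq PBq (x n) - x n‖ ≤ 2 * ‖x 0 - f‖ := by
      calc ‖Tmap β PAq PBq (x n) - x n‖
          = ‖(Tmap β PAq PBq (x n) - f) + (f - x n)‖ := by rw [sub_add_sub_cancel]
        _ ≤ ‖Tmap β PAq PBq (x n) - f‖ + ‖f - x n‖ := norm_add_le _ _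
        _ = ‖Tmap β PAq PBq (x n) - f‖ + ‖x n - f‖ := by rw [norm_sub_rev f (x n)]
        _ ≤ ‖x n - f‖ + ‖x n - f‖ := by linarith [t4]
        _ ≤ 2 * ‖x 0 - f‖ := by linarith [hbound n]
    calc |‖PAq (x (n + 1)) - pt‖ - ‖PAq (x n) - pt‖|
        ≤ ‖x (n + 1) - x n‖ := le_trans t1 t2
      _ = lam n * ‖Tmap β PAq PBq (x n) - x n‖ := t3
      _ ≤ lam n * (2 * ‖x 0 - f‖) := mul_le_mul_of_nonneg_left t5 (hlam n).1
      _ ≤ (2 * ‖x 0 - f‖ + 1) * lam n := by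
          rw [mul_comm]
          exact mul_le_mul_of_nonneg_right (by linarith) (hlam n).1
  -- strong convergence of the shadow residual
  have hzz : Tendsto (fun n => ‖PAq (x n) - pt‖) atTop (nhds 0) := by
    apply tendsto_zero_of_step _ lam (2 * ‖x 0 - f‖ + 1)
      (by positivity) (fun n => norm_nonneg _) (fun n => (hlam n).1) hstep hsumm hdiv
  have hconv : Tendsto (fun n => PAq (x n)) atTop (nhds pt) :=
    tendsto_iff_norm_sub_tendsto_zero.2 hzz
  -- translate back
  have hPAshift : ∀ z : H, PA (q + z) = q + PAq z := by
    intro z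
    apply proj_eq_of hAcv hPA
    · obtain ⟨a, haA, hEq⟩ := (hPAq z).1
      have : q + PAq z = a := by rw [← hEq]; show q + (a - q) = a; abel
      rw [this]; exact haA
    · intro c hcA
      have h := proj_inner_le hAcv' hPAq z (⟨c, hcA, rfl⟩ : c - q ∈ (fun a => a - q) '' A)
      have e1 : (q + z) - (q + PAq z) = z - PAq z := by abel
      have e2 : c - (q + PAq z) = (c - q) - PAq z := by abel
      rw [e1, e2]
      exact h
  have hfun : (fun n => PA (q + x n)) = fun n => q + PAq (x n) :=
    funext fun n => hPAshift (x n)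
  rw [hfun, show PAB q = q + pt by rw [hpt]; abel]
  exact tendsto_const_nhds.add hconv
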